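/- arXiv:1704.04619 — 7 statements merged into one kernel-verified Lean document; each statement's English description precedes it below -/
import Mathlib

section
/- Convergence theorem for two-step Runge–Kutta (TSRK) methods applied to retarded functional differential equations: Let r ≥ 0, d ≥ 1, let C := C([−r,0], ℝ^d) with the supremum norm, and for a continuous function u and time t write u_t ∈ C for the shift u_t(θ) = u(t+θ). Let f : ℝ × C → ℝ^d be continuous and Lipschitz in its second argument with constant L, uniformly in the first argument. Let t₀ < T and let y : [t₀−r−1, T] → ℝ^d be continuous and satisfy y′(t) = f(t, y_t) for all t ∈ [t₀, T]. Fix an integer s ≥ 1, abscissae c_1,…,c_s ∈ [0,1] with c_{s+1} := 1, and polynomial coefficient functions u_i, ã_{ij}, a_{ij} : ℝ → ℝ (i = 1,…,s+1, j = 1,…,s) with u_i(0) = 1 and ã_{ij}(0) = a_{ij}(0) = 0. Assume zero-stability: there is C_M ≥ 1 such that ‖M^l‖ ≤ C_M for all l ≥ 1, where M is the (s+2)×(s+2) matrix with entries M_{i,s+1} = u_i(c_i) and M_{i,s+2} = 1−u_i(c_i) for i = 1,…,s+1, M_{s+2,s+1} = 1, and all other entries 0, acting blockwise on (ℝ^d)^{s+2}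 equipped with the maximum-of-blocks norm. Fix an integer p ≥ 1 and C₁ > 0. Then there exist h̄ ∈ (0,1] and C > 0 with the following property. Let N ∈ ℕ with h := (T−t₀)/N ≤ h̄ and t_n := t₀+nh; for n = 0,…,N let Z^{[n]} : [−r,0] → (ℝ^d)^{s+2} be the exact value function with blocks Z^{[n],i} = y_{t_n+(c_i−1)h} for i = 1,…,s+1 and Z^{[n],s+2} ≡ y(t_{n−1}); let z^{[0]},…,z^{[N]} : [−r,0] → (ℝ^d)^{s+2} be continuous functions whose (s+2)-th block is constant which satisfy the TSRK recursion for n = 1,…,N: (i) z^{[n],i}(ω) = (1−u_i(ω/h+c_i))·z^{[n−1],s+2} + u_i(ω/h+c_i)·z^{[n−1],s+1}(0) + h·Σ_{j=1}^{s} ã_{ij}(ω/h+c_i)·f(t_{n−2}+c_j h, z^{[n−1],j}) + h·Σ_{j=1}^{s} a_{ij}(ω/h+c_i)·f(t_{n−1}+c_j h, z^{[n],j}) for ω ∈ [−c_i h, 0], i = 1,…,s+1; (ii) z^{[n],i}(ω) = z^{[n−1],s+1}(ω+c_i h) for ω ∈ [−r, −c_i h], i = 1,…,s+1; (iii) z^{[n],s+2}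 = z^{[n−1],s+1}(0). Define the global errors q^{[n]} := Z^{[n]} − z^{[n]}, and define the local residuals d^{[n]} : [−r,0] → (ℝ^d)^{s+2} by h·d^{[n],i}(ω) := Z^{[n],i}(ω) − (1−u_i(ω/h+c_i))·Z^{[n−1],s+2} − u_i(ω/h+c_i)·Z^{[n−1],s+1}(0) − h·Σ_{j=1}^{s} ã_{ij}(ω/h+c_i)·f(t_{n−2}+c_j h, Z^{[n−1],j}) − h·Σ_{j=1}^{s} a_{ij}(ω/h+c_i)·f(t_{n−1}+c_j h, Z^{[n],j}) for ω ∈ [−c_i h, 0], d^{[n],i}(ω) := 0 for ω ∈ [−r, −c_i h), and d^{[n],s+2} := 0. If ‖q^{[0]}‖ ≤ C₁·h^p, max_{1≤n≤N} ‖d^{[n]}‖ ≤ C₁·h^{p−1}, and max_{1≤n≤N−1} ‖d^{[n]}(0)‖ ≤ C₁·h^p (where ‖·‖ on functions is the supremum over [−r,0] of the maximum-of-blocks norm), then max_{0≤n≤N} ‖q^{[n]}‖ ≤ C·h^p, i.e. the method converges with uniform order p. -/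
/-!
Write `q⁽ⁿ⁾ = Z⁽ⁿ⁾ - z⁽ⁿ⁾` for the global error, `Eₙ = ‖q⁽ⁿ⁾‖` for its uniform norm and
`Xₙ = q⁽ⁿ⁾(0)` for its value at the gridpoint. Subtracting the recursion for `z` from the
defining identity of the residual `d` shows:

* on `[-cᵢh, 0]`, block `i` of `q⁽ⁿ⁾` is the combination `(1 - uᵢ) Xₙ₋₁,ₛ₊₂ + uᵢ Xₙ₋₁,ₛ₊₁` of
  gridpoint errors plus `h` times a term bounded by `μ (Eₙ₋₁ + Eₙ) + ‖d⁽ⁿ⁾‖`, where `μ` comes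
  from the Lipschitz constant of `f` and bounds on the polynomial coefficients; on `[-r, -cᵢh]`
  it is a shift of `q⁽ⁿ⁻¹⁾`, and the last block is constant;
* at `0` this reads `Xₙ = M Xₙ₋₁ + Gₙ` with `‖Gₙ‖ ≤ h μ (Eₙ₋₁ + Eₙ) + h ‖d⁽ⁿ⁾(0)‖`, and the
  defects sum to `O(hᵖ)`: each is `O(hᵖ⁺¹)` by discrete consistency, except the last one,
  which is only `O(hᵖ)` by uniform consistency.

Zero-stability bounds `‖Xₙ‖` by `‖X₀‖` plus the sum of the defects. Absorbing the `h μ Eₙ` term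
(for `h μ ≤ 1/2`) gives `Eₙ ≤ A hᵖ + B h ∑_{k<n} E_k`, and the discrete Grönwall inequality
turns this into `Eₙ ≤ A hᵖ exp (B n h) ≤ A exp (B (T - t₀)) hᵖ`.
-/

open Set Finset Real Matrix.Module

theorem exists_forall_norm_le_of_continuousOn {ι X E : Type*} [Finite ι] [TopologicalSpace X]
    [SeminormedAddCommGroup E] {K : Set X} (hK : IsCompact K) {v : ι → X → E}
    (hv : ∀ i, ContinuousOn (v i) K) : ∃ B, 0 ≤ B ∧ ∀ i, ∀ x ∈ K, ‖v i x‖ ≤ B := by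
  choose B hB using fun i => hK.exists_bound_of_continuousOn (hv i)
  obtain ⟨B', hB'⟩ := Finite.exists_le B
  exact ⟨max B' 0, le_max_right _ _, fun i x hx =>
    (hB i x hx).trans ((hB' i).trans (le_max_left _ _))⟩

theorem exists_forall_abs_le_of_eq_eval {ι : Type*} [Finite ι] {v : ι → ℝ → ℝ}
    (hv : ∀ i, ∃ P : Polynomial ℝ, ∀ x, v i x = P.eval x) :
    ∃ B, 0 ≤ B ∧ ∀ i, ∀ x ∈ Icc (0 : ℝ) 1, |v i x| ≤ B := by
  have hcont : ∀ i, Continuous (v i) := fun i => by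
    obtain ⟨P, hP⟩ := hv i
    exact funext hP ▸ P.continuous
  exact exists_forall_norm_le_of_continuousOn isCompact_Icc fun i => (hcont i).continuousOn

theorem norm_sum_smul_le {ι E : Type*} [Fintype ι] [SeminormedAddCommGroup E] [NormedSpace ℝ E]
    {a : ι → ℝ} {v : ι → E} {B R : ℝ}
    (hB : 0 ≤ B) (ha : ∀ j, |a j| ≤ B) (hv : ∀ j, ‖v j‖ ≤ R) :
    ‖∑ j, a j • v j‖ ≤ Fintype.card ι * B * R := by
  calc ‖∑ j, a j • v j‖ ≤ ∑ j, ‖a j • v j‖ := norm_sum_le _ _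
    _ ≤ ∑ _j : ι, B * R := sum_le_sum fun j _ => by
        rw [norm_smul, Real.norm_eq_abs]
        exact mul_le_mul (ha j) (hv j) (norm_nonneg _) hB
    _ = _ := by simp [mul_assoc]

theorem norm_sum_smul_sub_le {ι κ X E : Type*} [Fintype ι] [Fintype κ]
    [SeminormedAddCommGroup X] [SeminormedAddCommGroup E] [NormedSpace ℝ E] {F : ℝ → X → E}
    {L B : ℝ} (hF : ∀ t x y, ‖F t x - F t y‖ ≤ L * ‖x - y‖) (hB : 0 ≤ B) {α : ι → ℝ}
    (hα : ∀ j, |α j| ≤ B) (t : ι → ℝ) (k : ι → κ) (w w' : κ → X) :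
    ‖∑ j, α j • (F (t j) (w (k j)) - F (t j) (w' (k j)))‖
      ≤ Fintype.card ι * B * (max L 0 * ‖w - w'‖) :=
  norm_sum_smul_le hB hα fun j => (hF _ _ _).trans (mul_le_mul (le_max_left _ _)
    (norm_le_pi_norm (w - w') (k j)) (norm_nonneg _) (le_max_right _ _))

theorem norm_pi_eval_le {ι α E : Type*} [Fintype ι] [TopologicalSpace α] [CompactSpace α]
    [NormedAddCommGroup E] (f : ι → C(α, E)) (x : α) : ‖fun i => f i x‖ ≤ ‖f‖ :=
  (pi_norm_le_iff_of_nonneg (norm_nonneg f)).2 fun i =>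
    (ContinuousMap.norm_coe_le_norm (f i) x).trans (norm_le_pi_norm f i)

theorem div_add_mem_Icc_zero_one {h c ω : ℝ} (h0 : 0 < h) (hc : c ∈ Icc (0 : ℝ) 1)
    (hω : -(c * h) ≤ ω) (hω0 : ω ≤ 0) : ω / h + c ∈ Icc (0 : ℝ) 1 := by
  constructor
  · have : -c ≤ ω / h := by rw [le_div_iff₀ h0]; linarith
    linarith
  · linarith [hc.2, div_nonpos_of_nonpos_of_nonneg hω0 h0.le]

theorem sum_range_add_succ_le {E : ℕ → ℝ} (hE : ∀ n, 0 ≤ E n) (n : ℕ) :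
    ∑ k ∈ range n, (E k + E (k + 1)) ≤ 2 * ∑ k ∈ range (n + 1), E k := by
  rw [sum_add_distrib, two_mul]
  refine add_le_add (sum_le_sum_of_subset_of_nonneg (range_subset_range.2 n.le_succ)
    fun k _ _ => hE k) ?_
  rw [sum_range_succ' E n]
  linarith [hE 0]

theorem sum_range_le_of_le_of_last_le {δ : ℕ → ℝ} {N : ℕ} {a b : ℝ} (ha0 : 0 ≤ a)
    (hb0 : 0 ≤ b) (ha : ∀ n, n + 1 < N → δ n ≤ a) (hb : ∀ n, n + 1 = N → δ n ≤ b) :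
    ∑ n ∈ range N, δ n ≤ N * a + b := by
  cases N with
  | zero => simpa using hb0
  | succ m =>
    have hfirst : ∑ n ∈ range m, δ n ≤ m * a :=
      (sum_le_sum fun n hn => ha n (by simp at hn; omega)).trans (by simp)
    rw [sum_range_succ]
    push_cast
    linarith [hb m rfl]

theorem le_mul_exp_of_le_add_mul_sum {a : ℕ → ℝ} {A B : ℝ} {N : ℕ} (hA : 0 ≤ A) (hB : 0 ≤ B)
    (ha : ∀ n ≤ N, a n ≤ A + B * ∑ k ∈ range n, a k) : ∀ n ≤ N, a n ≤ A * exp (B * n) := by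
  have hpow : ∀ n ≤ N, a n ≤ A * (1 + B) ^ n := by
    intro n hn
    induction n using Nat.strong_induction_on with
    | _ n ih =>
      have hgeom := geom_sum_mul (1 + B) n
      rw [add_sub_cancel_left] at hgeom
      calc a n ≤ A + B * ∑ k ∈ range n, a k := ha n hn
        _ ≤ A + B * ∑ k ∈ range n, A * (1 + B) ^ k := by
            gcongr with k hk
            exact ih k (mem_range.1 hk) ((mem_range.1 hk).le.trans hn)
        _ = A * (1 + B) ^ n := by
            rw [← mul_sum, mul_left_comm, mul_comm B, hgeom]
            ring
  intro n hn
  calc a n ≤ A * (1 + B) ^ n := hpow n hn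
    _ ≤ A * exp B ^ n := by gcongr; linarith [add_one_le_exp B]
    _ = A * exp (B * n) := by rw [mul_comm B, exp_nat_mul]

theorem norm_le_of_norm_pow_smul_le {A V : Type*} [Monoid A] [SeminormedAddCommGroup V]
    [DistribMulAction A V] (T : A) {K : ℝ} (hK : ∀ l (x : V), ‖T ^ l • x‖ ≤ K * ‖x‖)
    (X : ℕ → V) (n : ℕ) :
    ‖X n‖ ≤ K * (‖X 0‖ + ∑ k ∈ range n, ‖X (k + 1) - T • X k‖) := by
  suffices ∀ l, ‖T ^ l • X n‖ ≤ K * (‖X 0‖ + ∑ k ∈ range n, ‖X (k + 1) - T • X k‖) by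
    simpa using this 0
  induction n with
  | zero => simpa using fun l => hK l (X 0)
  | succ n ih =>
    intro l
    have hsplit : T ^ l • X (n + 1) = T ^ (l + 1) • X n + T ^ l • (X (n + 1) - T • X n) := by
      rw [pow_succ, mul_smul, ← smul_add, add_sub_cancel]
    calc ‖T ^ l • X (n + 1)‖
        ≤ ‖T ^ (l + 1) • X n‖ + ‖T ^ l • (X (n + 1) - T • X n)‖ := hsplit ▸ norm_add_le _ _
      _ ≤ K * (‖X 0‖ + ∑ k ∈ range n, ‖X (k + 1) - T • X k‖) + K * ‖X (n + 1) - T • X n‖ :=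
          add_le_add (ih _) (hK _ _)
      _ = _ := by rw [sum_range_succ]; ring

section DiscreteStability

variable {A V : Type*} [Monoid A] [SeminormedAddCommGroup V] [DistribMulAction A V] {T : A}
  {K κ μ h ε Δ : ℝ} {N : ℕ} {E δ : ℕ → ℝ} {X : ℕ → V}

theorem norm_le_of_zero_stable (hK : ∀ l (x : V), ‖T ^ l • x‖ ≤ K * ‖x‖) (hK0 : 0 ≤ K)
    (hμ : 0 ≤ μ) (h0 : 0 ≤ h) (hδ : ∀ n, 0 ≤ δ n) (hΔ : ∑ n ∈ range N, δ n ≤ Δ)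
    (hXE : ∀ n, ‖X n‖ ≤ E n) (hE0 : E 0 ≤ ε)
    (hX : ∀ n < N, ‖X (n + 1) - T • X n‖ ≤ h * μ * (E n + E (n + 1)) + δ n) :
    ∀ n ≤ N, ‖X n‖ ≤ K * (ε + Δ) + 2 * K * h * μ * ∑ k ∈ range (n + 1), E k := by
  intro n hn
  have hdefect : ∑ k ∈ range n, ‖X (k + 1) - T • X k‖
      ≤ h * μ * (2 * ∑ k ∈ range (n + 1), E k) + Δ :=
    calc ∑ k ∈ range n, ‖X (k + 1) - T • X k‖
        ≤ ∑ k ∈ range n, (h * μ * (E k + E (k + 1)) + δ k) :=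
          sum_le_sum fun k hk => hX k (by simp at hk; omega)
      _ = h * μ * ∑ k ∈ range n, (E k + E (k + 1)) + ∑ k ∈ range n, δ k := by
          rw [sum_add_distrib, mul_sum]
      _ ≤ h * μ * (2 * ∑ k ∈ range (n + 1), E k) + Δ := by
          gcongr
          · exact sum_range_add_succ_le (fun n => (norm_nonneg _).trans (hXE n)) n
          · exact (sum_le_sum_of_subset_of_nonneg (range_subset_range.2 hn)
              fun k _ _ => hδ k).trans hΔ
  calc ‖X n‖ ≤ K * (‖X 0‖ + ∑ k ∈ range n, ‖X (k + 1) - T • X k‖) :=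
        norm_le_of_norm_pow_smul_le T hK X n
    _ ≤ K * (ε + (h * μ * (2 * ∑ k ∈ range (n + 1), E k) + Δ)) := by
        gcongr
        exact (hXE 0).trans hE0
    _ = _ := by ring

theorem le_add_mul_sum_of_zero_stable
    (hK : ∀ l (x : V), ‖T ^ l • x‖ ≤ K * ‖x‖) (hK0 : 0 ≤ K) (hκ : 0 ≤ κ) (hμ : 0 ≤ μ)
    (h0 : 0 ≤ h) (hhμ : h * μ ≤ 1 / 2) (hδ : ∀ n, 0 ≤ δ n) (hΔ : ∑ n ∈ range N, δ n ≤ Δ)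
    (hXE : ∀ n, ‖X n‖ ≤ E n) (hE0 : E 0 ≤ ε)
    (hE : ∀ n < N, E (n + 1) ≤ max (E n) (κ * ‖X n‖ + h * μ * (E n + E (n + 1)) + ε))
    (hX : ∀ n < N, ‖X (n + 1) - T • X n‖ ≤ h * μ * (E n + E (n + 1)) + δ n) :
    ∀ n ≤ N,
      E n ≤ 2 * ε + 2 * κ * K * (ε + Δ) + (4 * κ * K + 2) * μ * h * ∑ k ∈ range n, E k := by
  have hE₀ : ∀ n, 0 ≤ E n := fun n => (norm_nonneg _).trans (hXE n)
  have hε : 0 ≤ ε := (hE₀ 0).trans hE0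
  have hΔ₀ : 0 ≤ Δ := (sum_nonneg fun n _ => hδ n).trans hΔ
  have hXn := norm_le_of_zero_stable hK hK0 hμ h0 hδ hΔ hXE hE0 hX
  intro n hn
  induction n with
  | zero =>
    rw [range_zero, sum_empty, mul_zero, add_zero]
    linarith [mul_nonneg (mul_nonneg (mul_nonneg zero_le_two hκ) hK0) (add_nonneg hε hΔ₀)]
  | succ n ih =>
    have hn' : n < N := hn
    have hEn : E n ≤ ∑ k ∈ range (n + 1), E k := by
      rw [sum_range_succ]; linarith [sum_nonneg fun k (_ : k ∈ range n) => hE₀ k]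
    rcases le_max_iff.1 (hE n hn') with h1 | h1
    · refine h1.trans ((ih hn'.le).trans ?_)
      gcongr
      exacts [fun k _ _ => hE₀ k, n.le_succ]
    · have habsorb : h * μ * E (n + 1) ≤ E (n + 1) / 2 := by
        nlinarith [hE₀ (n + 1)]
      linarith [mul_le_mul_of_nonneg_left (hXn n hn'.le) hκ,
        mul_le_mul_of_nonneg_left hEn (mul_nonneg h0 hμ)]

end DiscreteStability

section TSRK

variable {W : Type*} [NormedAddCommGroup W] [NormedSpace ℝ W] {r : ℝ} {s : ℕ}

def tsrkMatrix (u : Fin (s + 1) → ℝ → ℝ) (c : Fin (s + 1) → ℝ) :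
    Matrix (Fin (s + 2)) (Fin (s + 2)) ℝ := fun i j =>
  if hi : (i : ℕ) < s + 1 then
    (if (j : ℕ) = s then u ⟨(i : ℕ), hi⟩ (c ⟨(i : ℕ), hi⟩)
     else if (j : ℕ) = s + 1 then 1 - u ⟨(i : ℕ), hi⟩ (c ⟨(i : ℕ), hi⟩) else 0)
  else (if (j : ℕ) = s then 1 else 0)

theorem tsrkMatrix_smul_castSucc (u : Fin (s + 1) → ℝ → ℝ) (c : Fin (s + 1) → ℝ)
    (x : Fin (s + 2) → W) (i : Fin (s + 1)) :
    (tsrkMatrix u c • x) i.castSucc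
      = u i (c i) • x (Fin.last s).castSucc + (1 - u i (c i)) • x (Fin.last (s + 1)) := by
  rw [Matrix.Module.smul_apply,
    Fintype.sum_eq_add (Fin.last s).castSucc (Fin.last (s + 1)) (by simp [Fin.ext_iff])]
  · simp [tsrkMatrix, Nat.lt_succ_iff.1 i.isLt]
  · intro j hj
    simp only [ne_eq, Fin.ext_iff, Fin.val_castSucc, Fin.val_last] at hj
    simp [tsrkMatrix, hj.1, hj.2]

theorem tsrkMatrix_smul_last (u : Fin (s + 1) → ℝ → ℝ) (c : Fin (s + 1) → ℝ)
    (x : Fin (s + 2) → W) :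
    (tsrkMatrix u c • x) (Fin.last (s + 1)) = x (Fin.last s).castSucc := by
  rw [Matrix.Module.smul_apply, Fintype.sum_eq_single (Fin.last s).castSucc]
  · simp [tsrkMatrix]
  · intro j hj
    simp only [ne_eq, Fin.ext_iff, Fin.val_castSucc, Fin.val_last] at hj
    simp [tsrkMatrix, hj]

-- Right-hand side of recursion (i), where `w`, `v` stand for `z⁽ⁿ⁻¹⁾`, `z⁽ⁿ⁾` and `o` for `0`.
noncomputable def tsrkStage (f : ℝ → C(Icc (-r) (0 : ℝ), W) → W) (t₀ h : ℝ) (c : Fin (s + 1) → ℝ)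
    (u : Fin (s + 1) → ℝ → ℝ) (atil a : Fin (s + 1) → Fin s → ℝ → ℝ) (o : Icc (-r) (0 : ℝ))
    (n : ℕ) (i : Fin (s + 1)) (ω : ℝ) (w v : Fin (s + 2) → C(Icc (-r) (0 : ℝ), W)) : W :=
  (1 - u i (ω / h + c i)) • w (Fin.last (s + 1)) o + u i (ω / h + c i) • w (Fin.last s).castSucc o
    + h • ∑ j : Fin s, atil i j (ω / h + c i) •
        f (t₀ + ((n : ℝ) - 2 + c j.castSucc) * h) (w j.castSucc.castSucc)
    + h • ∑ j : Fin s, a i j (ω / h + c i) •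
        f (t₀ + ((n : ℝ) - 1 + c j.castSucc) * h) (v j.castSucc.castSucc)

theorem tsrkStage_sub_tsrkStage (f : ℝ → C(Icc (-r) (0 : ℝ), W) → W) (t₀ h : ℝ)
    (c : Fin (s + 1) → ℝ) (u : Fin (s + 1) → ℝ → ℝ) (atil a : Fin (s + 1) → Fin s → ℝ → ℝ)
    (o : Icc (-r) (0 : ℝ)) (n : ℕ) (i : Fin (s + 1)) (ω : ℝ)
    (w v w' v' : Fin (s + 2) → C(Icc (-r) (0 : ℝ), W)) :
    tsrkStage f t₀ h c u atil a o n i ω w v - tsrkStage f t₀ h c u atil a o n i ω w' v'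
      = (1 - u i (ω / h + c i)) • (w - w') (Fin.last (s + 1)) o
        + u i (ω / h + c i) • (w - w') (Fin.last s).castSucc o
        + h • (∑ j : Fin s, atil i j (ω / h + c i) •
            (f (t₀ + ((n : ℝ) - 2 + c j.castSucc) * h) (w j.castSucc.castSucc)
              - f (t₀ + ((n : ℝ) - 2 + c j.castSucc) * h) (w' j.castSucc.castSucc))
          + ∑ j : Fin s, a i j (ω / h + c i) •
            (f (t₀ + ((n : ℝ) - 1 + c j.castSucc) * h) (v j.castSucc.castSucc)
              - f (t₀ + ((n : ℝ) - 1 + c j.castSucc) * h) (v' j.castSucc.castSucc))) := by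
  simp only [tsrkStage, Pi.sub_apply, ContinuousMap.sub_apply, smul_sub, sum_sub_distrib,
    smul_add]
  abel

/-- The relations between consecutive global errors `e = q⁽ⁿ⁻¹⁾`, `e' = q⁽ⁿ⁾` and the residual
`δ = d⁽ⁿ⁾` that follow from (i)–(iii); `μ` bounds the Lipschitz terms. -/
structure IsErrorStep (c : Fin (s + 1) → ℝ) (u : Fin (s + 1) → ℝ → ℝ) (h μ : ℝ)
    (o : Icc (-r) (0 : ℝ)) (δ e e' : Fin (s + 2) → C(Icc (-r) (0 : ℝ), W)) : Prop where
  stage : ∀ (i : Fin (s + 1)) (ω : Icc (-r) (0 : ℝ)), -(c i * h) ≤ ω →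
    ∃ w : W, ‖w‖ ≤ μ * (‖e‖ + ‖e'‖) + ‖δ i.castSucc ω‖ ∧
      e' i.castSucc ω = (1 - u i (ω / h + c i)) • e (Fin.last (s + 1)) o
        + u i (ω / h + c i) • e (Fin.last s).castSucc o + h • w
  shift : ∀ (i : Fin (s + 1)) (ω ω' : Icc (-r) (0 : ℝ)), (ω : ℝ) ≤ -(c i * h) →
    (ω' : ℝ) = ω + c i * h → e' i.castSucc ω = e (Fin.last s).castSucc ω'
  last : ∀ ω, e' (Fin.last (s + 1)) ω = e (Fin.last s).castSucc o

namespace IsErrorStep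

variable {c : Fin (s + 1) → ℝ} {u : Fin (s + 1) → ℝ → ℝ} {h μ : ℝ} {o : Icc (-r) (0 : ℝ)}
  {δ e e' : Fin (s + 2) → C(Icc (-r) (0 : ℝ), W)}

theorem norm_le_max (H : IsErrorStep c u h μ o δ e e') (hc : ∀ i, c i ∈ Icc (0 : ℝ) 1)
    (h0 : 0 < h) {B η : ℝ} (hu : ∀ i, ∀ x ∈ Icc (0 : ℝ) 1, |u i x| ≤ B) (hδ : ‖δ‖ ≤ η) :
    ‖e'‖ ≤ max ‖e‖ ((1 + 2 * B) * ‖fun i => e i o‖ + h * μ * (‖e‖ + ‖e'‖) + h * η) := by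
  have hEo : ∀ i, ‖e i o‖ ≤ ‖fun i => e i o‖ := norm_le_pi_norm (fun i => e i o)
  have he : ∀ i ω, ‖e i ω‖ ≤ ‖e‖ := fun i ω =>
    (ContinuousMap.norm_coe_le_norm _ ω).trans (norm_le_pi_norm e i)
  refine (pi_norm_le_iff_of_nonneg ((norm_nonneg _).trans (le_max_left _ _))).2 fun i => ?_
  refine (ContinuousMap.norm_le _ ((norm_nonneg _).trans (le_max_left _ _))).2 fun ω => ?_
  induction i using Fin.lastCases with
  | last => exact (H.last ω ▸ he _ o).trans (le_max_left _ _)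
  | cast i =>
    rcases le_or_gt (-(c i * h)) (ω : ℝ) with hω | hω
    · obtain ⟨w, hw, heq⟩ := H.stage i ω hω
      have hx := div_add_mem_Icc_zero_one h0 (hc i) hω ω.2.2
      have hu1 := hu i _ hx
      have hu2 : |1 - u i (ω / h + c i)| ≤ 1 + B := (abs_sub _ _).trans (by simp [hu1])
      refine le_max_of_le_right ?_
      rw [heq]
      calc _ ≤ ‖(1 - u i (ω / h + c i)) • e (Fin.last (s + 1)) o‖
            + ‖u i (ω / h + c i) • e (Fin.last s).castSucc o‖ + ‖h • w‖ := norm_add₃_le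
        _ ≤ (1 + B) * ‖fun i => e i o‖ + B * ‖fun i => e i o‖
            + h * (μ * (‖e‖ + ‖e'‖) + η) := by
          simp only [norm_smul, Real.norm_eq_abs, abs_of_pos h0]
          have hδω : ‖δ i.castSucc ω‖ ≤ η :=
            (ContinuousMap.norm_coe_le_norm _ ω).trans ((norm_le_pi_norm δ _).trans hδ)
          have hB : 0 ≤ B := (abs_nonneg _).trans hu1
          exact add_le_add (add_le_add (mul_le_mul hu2 (hEo _) (norm_nonneg _) (by linarith))
            (mul_le_mul hu1 (hEo _) (norm_nonneg _) hB))
            (mul_le_mul_of_nonneg_left (hw.trans (by linarith)) h0.le)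
        _ = _ := by ring
    · rw [H.shift i ω ⟨ω + c i * h, ?_, ?_⟩ hω.le rfl]
      · exact (he _ _).trans (le_max_left _ _)
      · linarith [ω.2.1, mul_nonneg (hc i).1 h0.le]
      · linarith

theorem norm_defect_le (H : IsErrorStep c u h μ o δ e e') (ho : (o : ℝ) = 0)
    (hc : ∀ i, 0 ≤ c i) (h0 : 0 ≤ h) (hμ : 0 ≤ μ) :
    ‖(fun i => e' i o) - tsrkMatrix u c • (fun i => e i o)‖
      ≤ h * (μ * (‖e‖ + ‖e'‖) + ‖fun i => δ i o‖) := by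
  refine (pi_norm_le_iff_of_nonneg (mul_nonneg h0 (add_nonneg (mul_nonneg hμ (by positivity))
    (norm_nonneg _)))).2 fun i => ?_
  induction i using Fin.lastCases with
  | last =>
    rw [Pi.sub_apply, tsrkMatrix_smul_last, H.last o, sub_self, norm_zero]
    exact mul_nonneg h0 (add_nonneg (mul_nonneg hμ (by positivity)) (norm_nonneg _))
  | cast i =>
    obtain ⟨w, hw, heq⟩ := H.stage i o (by rw [ho]; exact neg_nonpos.2 (mul_nonneg (hc i) h0))
    rw [ho, zero_div, zero_add] at heq
    have hdefect : e' i.castSucc o - (u i (c i) • e (Fin.last s).castSucc o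
        + (1 - u i (c i)) • e (Fin.last (s + 1)) o) = h • w := by
      rw [heq]; abel
    rw [Pi.sub_apply, tsrkMatrix_smul_castSucc, hdefect, norm_smul, Real.norm_eq_abs,
      abs_of_nonneg h0]
    gcongr
    exact hw.trans (add_le_add le_rfl (norm_le_pi_norm (fun i => δ i o) _))

end IsErrorStep

def rightEnd (hr : 0 ≤ r) : Icc (-r) (0 : ℝ) := ⟨0, right_mem_Icc.2 (neg_nonpos.2 hr)⟩

theorem isErrorStep_of_tsrk (hr : 0 ≤ r) {f : ℝ → C(Icc (-r) (0 : ℝ), W) → W} {L : ℝ}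
    (hf : ∀ t φ ψ, ‖f t φ - f t ψ‖ ≤ L * ‖φ - ψ‖) {c : Fin (s + 1) → ℝ}
    (hc : ∀ i, c i ∈ Icc (0 : ℝ) 1) (hcl : c (Fin.last s) = 1) {u : Fin (s + 1) → ℝ → ℝ}
    {atil a : Fin (s + 1) → Fin s → ℝ → ℝ} {B : ℝ} (hB : 0 ≤ B)
    (hatil : ∀ i j, ∀ x ∈ Icc (0 : ℝ) 1, |atil i j x| ≤ B)
    (ha : ∀ i j, ∀ x ∈ Icc (0 : ℝ) 1, |a i j x| ≤ B) {t₀ h : ℝ} (h0 : 0 < h) {N : ℕ}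
    {y : ℝ → W} {Z z dd : ℕ → Fin (s + 2) → C(Icc (-r) (0 : ℝ), W)}
    (hZ : ∀ n ≤ N, ∀ (i : Fin (s + 1)) (θ : Icc (-r) (0 : ℝ)),
      Z n i.castSucc θ = y (t₀ + (n : ℝ) * h + (c i - 1) * h + (θ : ℝ)))
    (hZl : ∀ n ≤ N, ∀ θ : Icc (-r) (0 : ℝ),
      Z n (Fin.last (s + 1)) θ = y (t₀ + ((n : ℝ) - 1) * h))
    (hstage : ∀ n, 1 ≤ n → n ≤ N → ∀ (i : Fin (s + 1)) (ω : Icc (-r) (0 : ℝ)),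
      -(c i * h) ≤ ω →
        z n i.castSucc ω = tsrkStage f t₀ h c u atil a (rightEnd hr) n i ω (z (n - 1)) (z n))
    (hshift : ∀ n, 1 ≤ n → n ≤ N → ∀ (i : Fin (s + 1)) (ω ω' : Icc (-r) (0 : ℝ)),
      (ω : ℝ) ≤ -(c i * h) → (ω' : ℝ) = ω + c i * h →
        z n i.castSucc ω = z (n - 1) (Fin.last s).castSucc ω')
    (hlast : ∀ n, 1 ≤ n → n ≤ N → ∀ θ,
      z n (Fin.last (s + 1)) θ = z (n - 1) (Fin.last s).castSucc (rightEnd hr))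
    (hres : ∀ n, 1 ≤ n → n ≤ N → ∀ (i : Fin (s + 1)) (ω : Icc (-r) (0 : ℝ)),
      -(c i * h) ≤ ω → h • dd n i.castSucc ω
        = Z n i.castSucc ω - tsrkStage f t₀ h c u atil a (rightEnd hr) n i ω (Z (n - 1)) (Z n))
    {n : ℕ} (hn : 1 ≤ n) (hnN : n ≤ N) :
    IsErrorStep c u h (s * B * max L 0) (rightEnd hr) (dd n) (Z (n - 1) - z (n - 1))
      (Z n - z n) := by
  have hZs : ∀ θ : Icc (-r) (0 : ℝ),
      Z (n - 1) (Fin.last s).castSucc θ = y (t₀ + ((n : ℝ) - 1) * h + θ) := by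
    intro θ
    rw [hZ (n - 1) (by omega) (Fin.last s) θ, hcl, Nat.cast_sub hn, Nat.cast_one]
    ring_nf
  constructor
  · intro i ω hω
    have hx := div_add_mem_Icc_zero_one h0 (hc i) hω ω.2.2
    refine ⟨∑ j : Fin s, atil i j (ω / h + c i) •
        (f (t₀ + ((n : ℝ) - 2 + c j.castSucc) * h) (Z (n - 1) j.castSucc.castSucc)
          - f (t₀ + ((n : ℝ) - 2 + c j.castSucc) * h) (z (n - 1) j.castSucc.castSucc))
      + ∑ j : Fin s, a i j (ω / h + c i) •
        (f (t₀ + ((n : ℝ) - 1 + c j.castSucc) * h) (Z n j.castSucc.castSucc)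
          - f (t₀ + ((n : ℝ) - 1 + c j.castSucc) * h) (z n j.castSucc.castSucc))
      + dd n i.castSucc ω, ?_, ?_⟩
    · refine norm_add₃_le.trans ?_
      have hprev := norm_sum_smul_sub_le hf hB (fun j => hatil i j _ hx)
        (fun j => t₀ + ((n : ℝ) - 2 + c j.castSucc) * h) (fun j => j.castSucc.castSucc)
        (Z (n - 1)) (z (n - 1))
      have hcur := norm_sum_smul_sub_le hf hB (fun j => ha i j _ hx)
        (fun j => t₀ + ((n : ℝ) - 1 + c j.castSucc) * h) (fun j => j.castSucc.castSucc) (Z n) (z n)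
      simp only [Fintype.card_fin] at hprev hcur
      linarith
    · have hZω : Z n i.castSucc ω = h • dd n i.castSucc ω
          + tsrkStage f t₀ h c u atil a (rightEnd hr) n i ω (Z (n - 1)) (Z n) := by
        rw [hres n hn hnN i ω hω, sub_add_cancel]
      rw [Pi.sub_apply, ContinuousMap.sub_apply, hZω, hstage n hn hnN i ω hω, add_sub_assoc,
        tsrkStage_sub_tsrkStage]
      simp only [smul_add]
      abel
  · intro i ω ω' hω hω'
    simp only [Pi.sub_apply, ContinuousMap.sub_apply]
    rw [hshift n hn hnN i ω ω' hω hω', hZ n hnN i ω, hZs ω', hω']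
    ring_nf
  · intro ω
    simp only [Pi.sub_apply, ContinuousMap.sub_apply]
    rw [hlast n hn hnN ω, hZl n hnN ω, hZs]
    simp [rightEnd]

theorem norm_le_of_forall_isErrorStep (hr : 0 ≤ r) {c : Fin (s + 1) → ℝ} {u : Fin (s + 1) → ℝ → ℝ}
    {h μ Bu CM C₁ : ℝ} {N p : ℕ} {e dd : ℕ → Fin (s + 2) → C(Icc (-r) (0 : ℝ), W)}
    (hstep : ∀ n, 1 ≤ n → n ≤ N → IsErrorStep c u h μ (rightEnd hr) (dd n) (e (n - 1)) (e n))
    (hc : ∀ i, c i ∈ Icc (0 : ℝ) 1) (h0 : 0 < h) (hμ : 0 ≤ μ) (hhμ : h * μ ≤ 1 / 2)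
    (hBu : 0 ≤ Bu) (hu : ∀ i, ∀ x ∈ Icc (0 : ℝ) 1, |u i x| ≤ Bu) (hCM : 1 ≤ CM)
    (hMpow : ∀ l : ℕ, 1 ≤ l → ∀ x : Fin (s + 2) → W, ‖tsrkMatrix u c ^ l • x‖ ≤ CM * ‖x‖)
    (hp : 1 ≤ p) (hC₁ : 0 ≤ C₁) (he0 : ∀ i, ‖e 0 i‖ ≤ C₁ * h ^ p)
    (hdU : ∀ n, 1 ≤ n → n ≤ N → ∀ i, ‖dd n i‖ ≤ C₁ * h ^ (p - 1))
    (hdD : ∀ n, 1 ≤ n → n ≤ N - 1 → ∀ i, ‖dd n i (rightEnd hr)‖ ≤ C₁ * h ^ p) :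
    ∀ n ≤ N, ‖e n‖ ≤ C₁ * h ^ p * (2 + 2 * (1 + 2 * Bu) * CM * (N * h + 2))
      * exp ((4 * (1 + 2 * Bu) * CM + 2) * μ * h * n) := by
  set o := rightEnd hr
  have hhp : h * (C₁ * h ^ (p - 1)) = C₁ * h ^ p := by
    rw [mul_left_comm, ← pow_succ', Nat.sub_add_cancel hp]
  have hstep' : ∀ n < N, IsErrorStep c u h μ o (dd (n + 1)) (e n) (e (n + 1)) := fun n hn => by
    simpa only [Nat.add_sub_cancel] using hstep (n + 1) (by omega) hn
  have hK : ∀ l (x : Fin (s + 2) → W), ‖tsrkMatrix u c ^ l • x‖ ≤ CM * ‖x‖ := by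
    intro l x
    rcases Nat.eq_zero_or_pos l with rfl | hl
    · rw [pow_zero, one_smul]
      exact le_mul_of_one_le_left (norm_nonneg x) hCM
    · exact hMpow l hl x
  have hdd : ∀ n, 1 ≤ n → n ≤ N → ‖dd n‖ ≤ C₁ * h ^ (p - 1) := fun n h1 h2 =>
    (pi_norm_le_iff_of_nonneg (by positivity)).2 (hdU n h1 h2)
  have hδ : ∑ n ∈ range N, h * ‖fun i => dd (n + 1) i o‖ ≤ N * (h * (C₁ * h ^ p)) + C₁ * h ^ p :=
    sum_range_le_of_le_of_last_le (by positivity) (by positivity)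
      (fun n hn => mul_le_mul_of_nonneg_left ((pi_norm_le_iff_of_nonneg (by positivity)).2
        (hdD (n + 1) (by omega) (by omega))) h0.le)
      (fun n hn => hhp ▸ mul_le_mul_of_nonneg_left
        ((norm_pi_eval_le _ o).trans (hdd (n + 1) (by omega) hn.le)) h0.le)
  have hsum := le_add_mul_sum_of_zero_stable (T := tsrkMatrix u c)
    (X := fun n i => e n i o) (E := fun n => ‖e n‖) hK (by linarith) (by linarith) hμ h0.le hhμ
    (fun n => by positivity) hδ (fun n => norm_pi_eval_le (e n) o)
    ((pi_norm_le_iff_of_nonneg (by positivity)).2 he0)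
    (fun n hn => hhp ▸ (hstep' n hn).norm_le_max hc h0 hu (hdd (n + 1) (by omega) hn))
    (fun n hn => ((hstep' n hn).norm_defect_le rfl (fun i => (hc i).1) h0.le hμ).trans_eq
      (by ring))
  intro n hn
  calc ‖e n‖ ≤ _ := le_mul_exp_of_le_add_mul_sum (by positivity) (by positivity) hsum n hn
    _ = _ := by ring_nf

end TSRK

/-- Convergence theorem for two-step Runge–Kutta methods applied to retarded functional
differential equations `y′(t) = f(t, y_t)` (Theorem 1): if the method is zero-stable,
the starting error is `O(h^p)`, the uniform order of consistency is `p − 1` and the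
discrete order of consistency is `p`, then the uniform order of convergence is `p`.
Blocks of the method live in `C([−r,0], ℝ^d)`; block `i ≤ s+1` of the exact value
function `Z^{[n]}` is the shift `y_{t_n+(c_i−1)h}` and block `s+2` is constantly
`y(t_{n−1})`. -/
theorem tsrk_convergence
    (r : ℝ) (hr : 0 ≤ r) (d : ℕ) (L : ℝ)
    (f : ℝ → C(Set.Icc (-r) (0 : ℝ), EuclideanSpace ℝ (Fin d)) → EuclideanSpace ℝ (Fin d))
    (hf_lip : ∀ t φ ψ, ‖f t φ - f t ψ‖ ≤ L * ‖φ - ψ‖)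
    (t₀ T : ℝ) (hT : t₀ < T)
    (y : ℝ → EuclideanSpace ℝ (Fin d))
    (s : ℕ)
    (c : Fin (s + 1) → ℝ) (hc : ∀ i, c i ∈ Set.Icc (0 : ℝ) 1) (hcl : c (Fin.last s) = 1)
    (u : Fin (s + 1) → ℝ → ℝ) (atil a : Fin (s + 1) → Fin s → ℝ → ℝ)
    (hupoly : ∀ i, ∃ P : Polynomial ℝ, ∀ x, u i x = P.eval x)
    (hatilpoly : ∀ i j, ∃ P : Polynomial ℝ, ∀ x, atil i j x = P.eval x)
    (hapoly : ∀ i j, ∃ P : Polynomial ℝ, ∀ x, a i j x = P.eval x)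
    (M : Matrix (Fin (s + 2)) (Fin (s + 2)) ℝ)
    (hM : ∀ i j, M i j =
      if hi : (i : ℕ) < s + 1 then
        (if (j : ℕ) = s then u ⟨(i : ℕ), hi⟩ (c ⟨(i : ℕ), hi⟩)
         else if (j : ℕ) = s + 1 then 1 - u ⟨(i : ℕ), hi⟩ (c ⟨(i : ℕ), hi⟩) else 0)
      else (if (j : ℕ) = s then 1 else 0))
    (CM : ℝ) (hCM : 1 ≤ CM)
    (hMpow : ∀ l : ℕ, 1 ≤ l → ∀ x : Fin (s + 2) → EuclideanSpace ℝ (Fin d),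
      ‖(fun i => ∑ j, (M ^ l) i j • x j : Fin (s + 2) → EuclideanSpace ℝ (Fin d))‖ ≤ CM * ‖x‖)
    (p : ℕ) (hp : 1 ≤ p) (C₁ : ℝ) (hC₁ : 0 < C₁) :
    ∃ hbar ∈ Set.Ioc (0 : ℝ) 1, ∃ C > 0,
      ∀ (N : ℕ) (hN : 0 < N) (h : ℝ) (hheq : h = (T - t₀) / N), h ≤ hbar →
      ∀ Z z dd : ℕ → Fin (s + 2) → C(Set.Icc (-r) (0 : ℝ), EuclideanSpace ℝ (Fin d)),
        -- exact value function: blocks 1,…,s+1 are shifts of the exact solution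
        (∀ n ≤ N, ∀ (i : Fin (s + 1)) (θ : Set.Icc (-r) (0 : ℝ)),
          Z n i.castSucc θ = y (t₀ + (n : ℝ) * h + (c i - 1) * h + (θ : ℝ))) →
        -- exact value function: block s+2 is constantly y(t_{n−1})
        (∀ n ≤ N, ∀ θ : Set.Icc (-r) (0 : ℝ),
          Z n (Fin.last (s + 1)) θ = y (t₀ + ((n : ℝ) - 1) * h)) →
        -- the (s+2)-th block of the numerical solution is constant
        (∀ n ≤ N, ∀ θ θ' : Set.Icc (-r) (0 : ℝ),
          z n (Fin.last (s + 1)) θ = z n (Fin.last (s + 1)) θ') →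
        -- TSRK recursion (i): on [−c_i h, 0]
        (∀ n, 1 ≤ n → n ≤ N → ∀ i : Fin (s + 1), ∀ ω : Set.Icc (-r) (0 : ℝ),
          -(c i * h) ≤ (ω : ℝ) →
            z n i.castSucc ω =
              (1 - u i ((ω : ℝ) / h + c i)) •
                  z (n - 1) (Fin.last (s + 1)) ⟨0, Set.right_mem_Icc.mpr (by linarith)⟩
                + u i ((ω : ℝ) / h + c i) •
                  z (n - 1) ((Fin.last s).castSucc) ⟨0, Set.right_mem_Icc.mpr (by linarith)⟩
                + h • ∑ j : Fin s, atil i j ((ω : ℝ) / h + c i) •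
                    f (t₀ + ((n : ℝ) - 2 + c j.castSucc) * h) (z (n - 1) j.castSucc.castSucc)
                + h • ∑ j : Fin s, a i j ((ω : ℝ) / h + c i) •
                    f (t₀ + ((n : ℝ) - 1 + c j.castSucc) * h) (z n j.castSucc.castSucc)) →
        -- TSRK recursion (ii): on [−r, −c_i h]
        (∀ n, 1 ≤ n → n ≤ N → ∀ i : Fin (s + 1), ∀ ω : Set.Icc (-r) (0 : ℝ),
          ∀ hω : (ω : ℝ) ≤ -(c i * h),
            z n i.castSucc ω = z (n - 1) ((Fin.last s).castSucc)
              ⟨(ω : ℝ) + c i * h, by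
                have h0 : 0 < h := by
                  rw [hheq]; exact div_pos (sub_pos.mpr hT) (Nat.cast_pos.mpr hN)
                have hch : 0 ≤ c i * h := mul_nonneg (hc i).1 h0.le
                exact Set.mem_Icc.mpr ⟨by linarith [ω.2.1], by linarith⟩⟩) →
        -- TSRK recursion (iii): the new constant block
        (∀ n, 1 ≤ n → n ≤ N → ∀ θ : Set.Icc (-r) (0 : ℝ),
          z n (Fin.last (s + 1)) θ =
            z (n - 1) ((Fin.last s).castSucc) ⟨0, Set.right_mem_Icc.mpr (by linarith)⟩) →
        -- local residuals, blocks 1,…,s+1, on [−c_i h, 0]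
        (∀ n, 1 ≤ n → n ≤ N → ∀ i : Fin (s + 1), ∀ ω : Set.Icc (-r) (0 : ℝ),
          -(c i * h) ≤ (ω : ℝ) →
            h • dd n i.castSucc ω =
              Z n i.castSucc ω
                - (1 - u i ((ω : ℝ) / h + c i)) •
                    Z (n - 1) (Fin.last (s + 1)) ⟨0, Set.right_mem_Icc.mpr (by linarith)⟩
                - u i ((ω : ℝ) / h + c i) •
                    Z (n - 1) ((Fin.last s).castSucc) ⟨0, Set.right_mem_Icc.mpr (by linarith)⟩
                - h • ∑ j : Fin s, atil i j ((ω : ℝ) / h + c i) •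
                    f (t₀ + ((n : ℝ) - 2 + c j.castSucc) * h) (Z (n - 1) j.castSucc.castSucc)
                - h • ∑ j : Fin s, a i j ((ω : ℝ) / h + c i) •
                    f (t₀ + ((n : ℝ) - 1 + c j.castSucc) * h) (Z n j.castSucc.castSucc)) →
        -- local residuals vanish on [−r, −c_i h) and in the (s+2)-th block
        (∀ n, 1 ≤ n → n ≤ N → ∀ i : Fin (s + 1), ∀ ω : Set.Icc (-r) (0 : ℝ),
          (ω : ℝ) < -(c i * h) → dd n i.castSucc ω = 0) →
        (∀ n, 1 ≤ n → n ≤ N → ∀ θ : Set.Icc (-r) (0 : ℝ), dd n (Fin.last (s + 1)) θ = 0) →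
        -- starting error of uniform order p
        (∀ i, ‖Z 0 i - z 0 i‖ ≤ C₁ * h ^ p) →
        -- uniform order of consistency p − 1
        (∀ n, 1 ≤ n → n ≤ N → ∀ i, ‖dd n i‖ ≤ C₁ * h ^ (p - 1)) →
        -- discrete order of consistency p
        (∀ n, 1 ≤ n → n ≤ N - 1 → ∀ i,
          ‖dd n i ⟨0, Set.right_mem_Icc.mpr (by linarith)⟩‖ ≤ C₁ * h ^ p) →
        -- conclusion: uniform order of convergence p
        ∀ n ≤ N, ∀ i, ‖Z n i - z n i‖ ≤ C * h ^ p := by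
  obtain ⟨Bu, hBu0, hBu⟩ := exists_forall_abs_le_of_eq_eval hupoly
  obtain ⟨Ba, hBa0, hBa⟩ := exists_forall_abs_le_of_eq_eval
    (v := Sum.elim (fun q : Fin (s + 1) × Fin s => atil q.1 q.2)
      fun q : Fin (s + 1) × Fin s => a q.1 q.2)
    (by rintro (⟨i, j⟩ | ⟨i, j⟩); exacts [hatilpoly i j, hapoly i j])
  obtain rfl : M = tsrkMatrix u c := Matrix.ext hM
  set μ := s * Ba * max L 0
  set K := 4 * (1 + 2 * Bu) * CM + 2
  refine ⟨min 1 (1 / (2 * (μ + 1))), ⟨by positivity, min_le_left _ _⟩,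
    C₁ * (2 + 2 * (1 + 2 * Bu) * CM * (T - t₀ + 2)) * exp (K * μ * (T - t₀)), by positivity, ?_⟩
  intro N hN h hheq hhbar Z z dd hZ hZl _ hrec1 hrec2 hrec3 hres _ _ hq0 hdU hdD n hn i
  have h0 : 0 < h := hheq ▸ div_pos (sub_pos.2 hT) (Nat.cast_pos.2 hN)
  have hNh : N * h = T - t₀ := by rw [hheq]; field_simp
  have hhμ : h * μ ≤ 1 / 2 := by
    have := hhbar.trans (min_le_right _ _)
    rw [le_div_iff₀ (by positivity)] at this
    nlinarith
  have hstep : ∀ m, 1 ≤ m → m ≤ N →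
      IsErrorStep c u h μ (rightEnd hr) (dd m) ((Z - z) (m - 1)) ((Z - z) m) :=
    fun m h1 h2 => isErrorStep_of_tsrk hr hf_lip hc hcl hBa0 (fun i j => hBa (.inl (i, j)))
      (fun i j => hBa (.inr (i, j))) h0 hZ hZl hrec1
      (fun m h1 h2 i ω ω' hω hω' => by
        rw [hrec2 m h1 h2 i ω hω]; congr 1; exact Subtype.ext hω'.symm)
      hrec3 (fun m h1 h2 i ω hω => by
        rw [hres m h1 h2 i ω hω]; simp only [tsrkStage, sub_sub]; rfl)
      h1 h2
  have herr := norm_le_of_forall_isErrorStep hr hstep hc h0 (by positivity) hhμ hBu0 hBu hCM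
    hMpow hp hC₁.le hq0 hdU hdD n hn
  have hexp : exp (K * μ * h * n) ≤ exp (K * μ * (T - t₀)) := by
    rw [mul_assoc _ h, ← hNh, mul_comm (N : ℝ)]
    gcongr
  calc ‖Z n i - z n i‖ ≤ ‖(Z - z) n‖ := norm_le_pi_norm ((Z - z) n) i
    _ ≤ _ := herr
    _ ≤ _ := by
      rw [hNh]
      exact (mul_le_mul_of_nonneg_left hexp (by positivity)).trans_eq (by ring)
end

section
/- Zero-stability criterion: Let s ≥ 1 be an integer and μ_1, …, μ_{s+1} ∈ ℝ; write v := μ_{s+1}. Let M be the (s+2)×(s+2) real matrix whose entry in row i, column s+1 is μ_i and in row i, column s+2 is 1−μ_i for i = 1, …, s+1, whose entry in row s+2, column s+1 is 1, and all of whose other entries are 0. Then M is power bounded (there exists C > 0 with ‖M^l‖ ≤ C for all l = 1, 2, …, in some, equivalently any, matrix norm) if and only if 0 ≤ v < 2. -/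
attribute [local instance] Matrix.normedAddCommGroup

/-- The affine recursion `x ↦ w * x + 1` started at `a`. -/
private def eSeq (w a : ℝ) : ℕ → ℝ
  | 0 => a
  | n + 1 => w * eSeq w a n + 1

private lemma eSeq_closed (w a : ℝ) (n : ℕ) :
    (1 - w) * eSeq w a n = w ^ n * ((1 - w) * a - 1) + 1 := by
  induction n with
  | zero => simp [eSeq]
  | succ n ih =>
    calc (1 - w) * eSeq w a (n + 1) = w * ((1 - w) * eSeq w a n) + (1 - w) := by
          simp [eSeq]; ring
      _ = w * (w ^ n * ((1 - w) * a - 1) + 1) + (1 - w) := by rw [ih]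
      _ = w ^ (n + 1) * ((1 - w) * a - 1) + 1 := by ring

private lemma eSeq_one (a : ℝ) (n : ℕ) : eSeq 1 a n = a + n := by
  induction n with
  | zero => simp [eSeq]
  | succ n ih => simp [eSeq, ih]; ring

/-- Zero-stability criterion (Lemma 1): the TSRK stability matrix `M` is power bounded
iff `0 ≤ v < 2`, where `v = μ (s+1)`. -/
theorem tsrk_zero_stability_criterion (s : ℕ) (hs : 1 ≤ s) (μ : Fin (s + 1) → ℝ)
    (M : Matrix (Fin (s + 2)) (Fin (s + 2)) ℝ)
    (hM : ∀ i j, M i j =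
      if hi : (i : ℕ) < s + 1 then
        (if (j : ℕ) = s then μ ⟨(i : ℕ), hi⟩
         else if (j : ℕ) = s + 1 then 1 - μ ⟨(i : ℕ), hi⟩ else 0)
      else (if (j : ℕ) = s then 1 else 0)) :
    (∃ C > 0, ∀ l : ℕ, 1 ≤ l → ‖M ^ l‖ ≤ C) ↔
      0 ≤ μ (Fin.last s) ∧ μ (Fin.last s) < 2 := by
  set v : ℝ := μ (Fin.last s) with hv
  set w : ℝ := v - 1 with hw
  set cs : Fin (s + 2) := ⟨s, by omega⟩ with hcs
  set cs1 : Fin (s + 2) := ⟨s + 1, by omega⟩ with hcs1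
  have hlast : (Fin.last s : Fin (s+1)) = ⟨s, by omega⟩ := rfl
  -- row `s` of `M`
  have hMcs : ∀ j : Fin (s+2), M cs j =
      if (j : ℕ) = s then v else if (j : ℕ) = s + 1 then 1 - v else 0 := by
    intro j
    rw [hM]
    rw [dif_pos (show ((cs : Fin (s+2)) : ℕ) < s + 1 by simp [hcs])]
    have : μ ⟨((cs : Fin (s+2)) : ℕ), by simp [hcs]⟩ = v := by
      rw [hv, hlast]
    rw [this]
  -- row `s+1` of `M`
  have hMcs1 : ∀ j : Fin (s+2), M cs1 j = if (j : ℕ) = s then 1 else 0 := by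
    intro j
    rw [hM]
    rw [dif_neg (show ¬ ((cs1 : Fin (s+2)) : ℕ) < s + 1 by simp [hcs1])]
  -- key structural lemma for powers of `M`
  have key : ∀ l : ℕ, ∀ i j : Fin (s+2), (M ^ (l+1)) i j =
      if (j : ℕ) = s then eSeq w (M i cs) l
      else if (j : ℕ) = s + 1 then 1 - eSeq w (M i cs) l else 0 := by
    intro l
    induction l with
    | zero =>
      intro i j
      rw [pow_one, hM i j]
      have hics : M i cs = if hi : (i : ℕ) < s + 1 then μ ⟨(i : ℕ), hi⟩ else 1 := by
        rw [hM]
        by_cases hi : (i : ℕ) < s + 1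
        · rw [dif_pos hi, dif_pos hi, if_pos (show ((cs : Fin (s+2)) : ℕ) = s from rfl)]
        · rw [dif_neg hi, dif_neg hi, if_pos (show ((cs : Fin (s+2)) : ℕ) = s from rfl)]
      rw [hics]
      by_cases hi : (i : ℕ) < s + 1
      · rw [dif_pos hi, dif_pos hi]
        simp only [eSeq]
      · rw [dif_neg hi, dif_neg hi]
        simp only [eSeq]
        split_ifs <;> norm_num
    | succ l ih =>
      intro i j
      have hstep : M ^ (l + 1 + 1) = M ^ (l + 1) * M := pow_succ M (l + 1)
      rw [hstep, Matrix.mul_apply]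
      set a : ℝ := M i cs with ha
      have hrow : ∀ k : Fin (s+2), (M ^ (l+1)) i k * M k j =
          (if k = cs then eSeq w a l * M k j else 0) +
          (if k = cs1 then (1 - eSeq w a l) * M k j else 0) := by
        intro k
        rw [ih i k]
        have hne : cs ≠ cs1 := by
          simp [hcs, hcs1, Fin.ext_iff]
        by_cases hk : (k : ℕ) = s
        · have hk' : k = cs := by simp [hcs, Fin.ext_iff, hk]
          rw [if_pos hk, if_pos hk', if_neg (by rw [hk']; exact hne)]
          ring
        · rw [if_neg hk]
          by_cases hk1 : (k : ℕ) = s + 1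
          · have hk' : k = cs1 := by simp [hcs1, Fin.ext_iff, hk1]
            rw [if_pos hk1, if_pos hk', if_neg (by rw [hk']; exact fun h => hne h.symm)]
            ring
          · have hk2 : k ≠ cs := by simp [hcs, Fin.ext_iff, hk]
            have hk3 : k ≠ cs1 := by simp [hcs1, Fin.ext_iff, hk1]
            rw [if_neg hk1, if_neg hk2, if_neg hk3]
            ring
      rw [Finset.sum_congr rfl (fun k _ => hrow k), Finset.sum_add_distrib,
        Finset.sum_ite_eq' Finset.univ cs, Finset.sum_ite_eq' Finset.univ cs1,
        if_pos (Finset.mem_univ cs), if_pos (Finset.mem_univ cs1), hMcs j, hMcs1 j]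
      by_cases hj : (j : ℕ) = s
      · rw [if_pos hj, if_pos hj, if_pos hj]
        simp only [eSeq]
        rw [hw]; ring
      · rw [if_neg hj, if_neg hj, if_neg hj]
        by_cases hj1 : (j : ℕ) = s + 1
        · rw [if_pos hj1, if_pos hj1]
          simp only [eSeq]
          rw [hw]; ring
        · rw [if_neg hj1, if_neg hj1]
          ring
  have hM1 : M cs1 cs = 1 := by rw [hMcs1]; exact if_pos rfl
  constructor
  · rintro ⟨C, hC, hbound⟩
    -- the entry `(s+1, s)` of `M^(l+1)` is `eSeq w 1 l`
    have hE : ∀ l : ℕ, |eSeq w 1 l| ≤ C := by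
      intro l
      have h1 : (M ^ (l+1)) cs1 cs = eSeq w 1 l := by
        rw [key l cs1 cs, if_pos rfl, hM1]
      have h2 : ‖(M ^ (l+1)) cs1 cs‖ ≤ ‖M ^ (l+1)‖ :=
        Matrix.norm_entry_le_entrywise_sup_norm (M ^ (l+1))
      rw [h1, Real.norm_eq_abs] at h2
      exact h2.trans (hbound (l+1) (by omega))
    have hwne : w ≠ 1 := by
      intro hw1
      have hn := hE ⌈C⌉₊
      rw [hw1, eSeq_one] at hn
      have hceil : C ≤ (⌈C⌉₊ : ℝ) := Nat.le_ceil C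
      have : |1 + (⌈C⌉₊ : ℝ)| = 1 + (⌈C⌉₊ : ℝ) := abs_of_pos (by positivity)
      rw [this] at hn
      linarith
    have hwle : |w| ≤ 1 := by
      by_contra hcon
      push_neg at hcon
      obtain ⟨n, hn⟩ := pow_unbounded_of_one_lt (1 + |1 - w| * C) hcon
      have hcl := eSeq_closed w 1 n
      have hpow : |w ^ (n+1)| ≤ 1 + |1 - w| * C := by
        have : w ^ (n+1) = 1 - (1 - w) * eSeq w 1 n := by
          rw [hcl]; ring
        rw [this]
        calc |1 - (1 - w) * eSeq w 1 n| ≤ |(1:ℝ)| + |(1 - w) * eSeq w 1 n| :=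
              abs_sub _ _
          _ = 1 + |1 - w| * |eSeq w 1 n| := by rw [abs_one, abs_mul]
          _ ≤ 1 + |1 - w| * C := by
              have := hE n
              nlinarith [abs_nonneg (1 - w)]
      rw [abs_pow] at hpow
      have h1 : |w| ^ n ≤ |w| ^ (n + 1) :=
        pow_le_pow_right₀ (le_of_lt hcon) (by omega)
      linarith
    rw [abs_le] at hwle
    constructor
    · rw [hv]; have := hwle.1; rw [hw] at this; linarith
    · rw [hv]
      have h1 : w < 1 := lt_of_le_of_ne hwle.2 hwne
      rw [hw] at h1; linarith
  · rintro ⟨h0, h2⟩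
    have hw1 : w < 1 := by rw [hw]; linarith
    have hwm1 : -1 ≤ w := by rw [hw]; linarith
    have hpos : (0:ℝ) < 1 - w := by linarith
    refine ⟨1 + ‖M‖ + 2 / (1 - w), by positivity, ?_⟩
    intro l hl
    obtain ⟨l', rfl⟩ : ∃ l', l = l' + 1 := ⟨l - 1, by omega⟩
    rw [Matrix.norm_le_iff (by positivity)]
    intro i j
    rw [key l' i j]
    set a : ℝ := M i cs with ha
    have hanorm : |a| ≤ ‖M‖ := by
      have := Matrix.norm_entry_le_entrywise_sup_norm M (i := i) (j := cs)
      rwa [Real.norm_eq_abs] at this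
    -- bound on the affine iterate
    have hEb : |eSeq w a l'| ≤ ‖M‖ + 2 / (1 - w) := by
      have hcl := eSeq_closed w a l'
      have hwpow : |w ^ l'| ≤ 1 := by
        rw [abs_pow]
        exact pow_le_one₀ (abs_nonneg w) (abs_le.mpr ⟨hwm1, le_of_lt hw1⟩)
      have hbnd : |(1 - w) * eSeq w a l'| ≤ (1 - w) * |a| + 2 := by
        rw [hcl]
        calc |w ^ l' * ((1 - w) * a - 1) + 1|
            ≤ |w ^ l' * ((1 - w) * a - 1)| + |(1:ℝ)| := abs_add_le _ _
          _ = |w ^ l'| * |(1 - w) * a - 1| + 1 := by rw [abs_mul, abs_one]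
          _ ≤ 1 * ((1 - w) * |a| + 1) + 1 := by
              have h3 : |(1 - w) * a - 1| ≤ (1 - w) * |a| + 1 := by
                calc |(1 - w) * a - 1| ≤ |(1 - w) * a| + |(1:ℝ)| := abs_sub _ _
                  _ = |1 - w| * |a| + 1 := by rw [abs_mul, abs_one]
                  _ = (1 - w) * |a| + 1 := by rw [abs_of_pos hpos]
              have h4 : (0:ℝ) ≤ |(1 - w) * a - 1| := abs_nonneg _
              nlinarith
          _ = (1 - w) * |a| + 2 := by ring
      rw [abs_mul, abs_of_pos hpos] at hbnd
      have h5 : (1 - w) * (‖M‖ + 2 / (1 - w)) = (1 - w) * ‖M‖ + 2 := by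
        field_simp
      have h6 : (1 - w) * |eSeq w a l'| ≤ (1 - w) * (‖M‖ + 2 / (1 - w)) := by
        rw [h5]; nlinarith
      exact le_of_mul_le_mul_left h6 hpos
    split_ifs with hj hj1
    · rw [Real.norm_eq_abs]
      linarith
    · rw [Real.norm_eq_abs]
      calc |1 - eSeq w a l'| ≤ |(1:ℝ)| + |eSeq w a l'| := abs_sub _ _
        _ = 1 + |eSeq w a l'| := by rw [abs_one]
        _ ≤ 1 + (‖M‖ + 2 / (1 - w)) := by linarith
        _ = 1 + ‖M‖ + 2 / (1 - w) := by ring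
    · simp only [norm_zero]
      positivity
end

section
/- Let s ≥ 1 be an integer and μ_1, …, μ_{s+1} ∈ ℝ; write v := μ_{s+1}. Let M be the (s+2)×(s+2) real matrix whose entry in row i, column s+1 is μ_i and in row i, column s+2 is 1−μ_i for i = 1, …, s+1, whose entry in row s+2, column s+1 is 1, and all of whose other entries are 0. Then the characteristic polynomial of M equals X^s·(X−1)·(X−(v−1)). -/
open Polynomial

/-- Determinant of a matrix whose first `n` columns are `x • eⱼ`. -/
lemma det_two_col {R : Type*} [CommRing R] :
    ∀ (n : ℕ) (B : Matrix (Fin (n + 2)) (Fin (n + 2)) R) (x : R),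
    (∀ (i j : Fin (n + 2)), (j : ℕ) < n → B i j = if i = j then x else 0) →
    B.det = x ^ n *
      (B ⟨n, by omega⟩ ⟨n, by omega⟩ * B ⟨n + 1, by omega⟩ ⟨n + 1, by omega⟩ -
       B ⟨n, by omega⟩ ⟨n + 1, by omega⟩ * B ⟨n + 1, by omega⟩ ⟨n, by omega⟩) := by
  intro n
  induction n with
  | zero =>
    intro B x _
    rw [Matrix.det_fin_two]
    ring_nf
    rfl
  | succ n ih =>
    intro B x hB
    rw [Matrix.det_succ_column_zero]
    have h0 : ∀ i : Fin (n + 3), i ≠ 0 → B i 0 = 0 := by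
      intro i hi
      rw [hB i 0 (by simp), if_neg hi]
    rw [Finset.sum_eq_single 0]
    · have hBx : B 0 0 = x := by rw [hB 0 0 (by simp), if_pos rfl]
      have hsub : (B.submatrix (Fin.succAbove 0) Fin.succ).det =
          x ^ n *
          (B ⟨n + 1, by omega⟩ ⟨n + 1, by omega⟩ * B ⟨n + 2, by omega⟩ ⟨n + 2, by omega⟩ -
           B ⟨n + 1, by omega⟩ ⟨n + 2, by omega⟩ * B ⟨n + 2, by omega⟩ ⟨n + 1, by omega⟩) := by
        have key := ih (B.submatrix (Fin.succAbove 0) Fin.succ) x ?_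
        · rw [key]
          congr 1
        · intro i j hj
          have hsa : (Fin.succAbove 0 i : ℕ) = (i : ℕ) + 1 := by
            simp [Fin.succAbove, Fin.lt_def]
          rw [Matrix.submatrix_apply]
          rw [hB _ _ (by simp; omega)]
          simp only [Fin.ext_iff, hsa, Fin.val_succ]
          by_cases h : (i : ℕ) = (j : ℕ) <;> simp [h]
      rw [hsub, hBx]
      simp only [Fin.val_zero, pow_zero, one_smul]
      ring_nf
    · intro i _ hi
      rw [h0 i hi]
      ring_nf
    · simp

/-- The characteristic polynomial of the TSRK stability matrix `M` is
`X^s * (X - 1) * (X - (v - 1))`, where `v = μ (s+1)`. -/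
theorem tsrk_stability_matrix_charpoly (s : ℕ) (hs : 1 ≤ s) (μ : Fin (s + 1) → ℝ)
    (M : Matrix (Fin (s + 2)) (Fin (s + 2)) ℝ)
    (hM : ∀ i j, M i j =
      if hi : (i : ℕ) < s + 1 then
        (if (j : ℕ) = s then μ ⟨(i : ℕ), hi⟩
         else if (j : ℕ) = s + 1 then 1 - μ ⟨(i : ℕ), hi⟩ else 0)
      else (if (j : ℕ) = s then 1 else 0)) :
    M.charpoly =
      Polynomial.X ^ s * (Polynomial.X - 1) *
        (Polynomial.X - Polynomial.C (μ (Fin.last s) - 1)) := by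
  rw [Matrix.charpoly]
  rw [det_two_col s (Matrix.charmatrix M) Polynomial.X ?_]
  · have hss : (s : ℕ) < s + 1 := by omega
    have e1 : Matrix.charmatrix M ⟨s, by omega⟩ ⟨s, by omega⟩ =
        Polynomial.X - Polynomial.C (μ ⟨s, hss⟩) := by
      rw [Matrix.charmatrix_apply_eq, hM]
      simp
    have e2 : Matrix.charmatrix M ⟨s, by omega⟩ ⟨s + 1, by omega⟩ =
        -Polynomial.C (1 - μ ⟨s, hss⟩) := by
      rw [Matrix.charmatrix_apply_ne _ _ _ (by simp [Fin.ext_iff]), hM]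
      simp
    have e3 : Matrix.charmatrix M ⟨s + 1, by omega⟩ ⟨s, by omega⟩ =
        -Polynomial.C 1 := by
      rw [Matrix.charmatrix_apply_ne _ _ _ (by simp [Fin.ext_iff]), hM]
      simp
    have e4 : Matrix.charmatrix M ⟨s + 1, by omega⟩ ⟨s + 1, by omega⟩ =
        Polynomial.X := by
      rw [Matrix.charmatrix_apply_eq, hM]
      simp
    rw [e1, e2, e3, e4]
    have hlast : μ (Fin.last s) = μ ⟨s, hss⟩ := rfl
    rw [hlast]
    simp only [map_sub, map_one]
    ring
  · intro i j hj
    have h1 : (j : ℕ) ≠ s := by omega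
    have h2 : (j : ℕ) ≠ s + 1 := by omega
    by_cases h : i = j
    · subst h
      rw [Matrix.charmatrix_apply_eq, hM]
      split <;> simp [h1, h2]
    · rw [Matrix.charmatrix_apply_ne _ _ _ h, hM]
      split <;> simp [h1, h2]
end

section
/- Let s ≥ 1 be an integer and μ_1, …, μ_{s+1} ∈ ℝ; write v := μ_{s+1}. Let M be the (s+2)×(s+2) real matrix whose entry in row i, column s+1 is μ_i and in row i, column s+2 is 1−μ_i for i = 1, …, s+1, whose entry in row s+2, column s+1 is 1, and all of whose other entries are 0. Then M·(M−I)·(M−(v−1)·I) = 0; equivalently, the minimal polynomial of M divides X·(X−1)·(X−(v−1)). -/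
/-- The TSRK stability matrix `M` annihilates the polynomial `X * (X - 1) * (X - (v - 1))`,
where `v = μ (s+1)`; equivalently, the minimal polynomial of `M` divides it. -/
theorem tsrk_stability_matrix_min_poly (s : ℕ) (hs : 1 ≤ s) (μ : Fin (s + 1) → ℝ)
    (M : Matrix (Fin (s + 2)) (Fin (s + 2)) ℝ)
    (hM : ∀ i j, M i j =
      if hi : (i : ℕ) < s + 1 then
        (if (j : ℕ) = s then μ ⟨(i : ℕ), hi⟩
         else if (j : ℕ) = s + 1 then 1 - μ ⟨(i : ℕ), hi⟩ else 0)
      else (if (j : ℕ) = s then 1 else 0)) :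
    M * (M - 1) * (M - (μ (Fin.last s) - 1) • 1) = 0 := by
  set v := μ (Fin.last s) with hv
  set e0 : Fin (s + 2) := ⟨s, by omega⟩ with he0
  set e1 : Fin (s + 2) := ⟨s + 1, by omega⟩ with he1
  have hne : e0 ≠ e1 := by simp [he0, he1, Fin.ext_iff]
  -- columns other than e0, e1 vanish
  have hMzero : ∀ i k, k ≠ e0 → k ≠ e1 → M i k = 0 := by
    intro i k h0 h1
    have hk0 : (k : ℕ) ≠ s := fun h => h0 (Fin.ext (by simp [he0, h]))
    have hk1 : (k : ℕ) ≠ s + 1 := fun h => h1 (Fin.ext (by simp [he1, h]))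
    rw [hM]
    split <;> simp [hk0, hk1]
  have hlast : (⟨s, Nat.lt_succ_self s⟩ : Fin (s + 1)) = Fin.last s := rfl
  have hv00 : M e0 e0 = v := by rw [hM]; simp [he0, hlast, hv]
  have hv01 : M e0 e1 = 1 - v := by rw [hM]; simp [he0, he1, hlast, hv]
  have hv10 : M e1 e0 = 1 := by rw [hM]; simp [he0, he1]
  have hv11 : M e1 e1 = 0 := by rw [hM]; simp [he1]
  have hsum : ∀ f : Fin (s + 2) → ℝ, (∀ k, k ≠ e0 → k ≠ e1 → f k = 0) →
      ∑ k, f k = f e0 + f e1 := by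
    intro f h
    rw [← Finset.sum_subset (Finset.subset_univ {e0, e1})]
    · rw [Finset.sum_pair hne]
    · intro x _ hx
      simp only [Finset.mem_insert, Finset.mem_singleton, not_or] at hx
      exact h x hx.1 hx.2
  have hP : ∀ i k, (M * (M - 1)) i k
      = M i e0 * (M - 1) e0 k + M i e1 * (M - 1) e1 k := by
    intro i k
    rw [Matrix.mul_apply]
    exact hsum _ (fun l h0 h1 => by rw [hMzero i l h0 h1, zero_mul])
  have hPzero : ∀ i k, k ≠ e0 → k ≠ e1 → (M * (M - 1)) i k = 0 := by
    intro i k h0 h1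
    rw [hP]
    simp [Matrix.sub_apply, Matrix.one_apply_ne (Ne.symm h0),
      Matrix.one_apply_ne (Ne.symm h1), hMzero e0 k h0 h1, hMzero e1 k h0 h1]
  ext i j
  rw [Matrix.mul_apply]
  have := hsum (fun k => (M * (M - 1)) i k * (M - (v - 1) • 1) k j)
    (fun k h0 h1 => by simp [hPzero i k h0 h1])
  rw [this]
  simp only [hP, Matrix.sub_apply, Matrix.smul_apply, Matrix.one_apply,
    Matrix.zero_apply, smul_eq_mul]
  by_cases hj0 : j = e0
  · subst hj0
    simp only [if_pos rfl, if_true, eq_self_iff_true, if_neg hne, if_neg (Ne.symm hne),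
      hv00, hv01, hv10, hv11]
    ring
  · by_cases hj1 : j = e1
    · subst hj1
      simp only [if_pos rfl, if_true, eq_self_iff_true, if_neg hne, if_neg (Ne.symm hne),
        hv00, hv01, hv10, hv11]
      ring
    · have z0 : M e0 j = 0 := hMzero e0 j hj0 hj1
      have z1 : M e1 j = 0 := hMzero e1 j hj0 hj1
      simp only [if_pos rfl, if_true, eq_self_iff_true, if_neg hne, if_neg (Ne.symm hne),
        if_neg (fun h => hj0 h.symm : ¬ e0 = j), if_neg (fun h => hj1 h.symm : ¬ e1 = j),
        hv00, hv01, hv10, hv11, z0, z1]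
      ring
end

section
/- Obstruction to discrete order five for two-stage explicit TSRK methods with c_1 = 0, c_2 = 1: Fix s = 2, c_1 = 0, c_2 = 1, c_3 := 1, and let u_i, ã_{ij}, a_{ij} (i = 1,2,3; j = 1,2) be any real coefficient functions; write v := u_3, b̃_j := ã_{3j}, b_j := a_{3j}, and define Γ_k(α) := (1/(k−1)!)·[ (1−v(α))·(−1)^k/k + Σ_{j=1}^{2} b̃_j(α)·(−(1−c_j))^{k−1} + Σ_{j=1}^{2} b_j(α)·c_j^{k−1} − α^k/k ]. If Γ_2(1) = Γ_3(1) = Γ_4(1) = 0, then Γ_5(1) = 1/90 (that is, the bracket 4!·Γ_5(1) equals 4/15); in particular Γ_5(1) ≠ 0, so no two-stage explicit TSRK method with these abscissae satisfying the uniform order conditions through order four can attain discrete order five. -/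
/-- The order polynomial `Γ_{ik}` of a two-stage TSRK method, for the row with
coefficients `u, ã_{i1}, ã_{i2}, a_{i1}, a_{i2}` and abscissae `c₁, c₂`. -/
noncomputable def Gamma2 (c₁ c₂ : ℝ) (u at1 at2 a1 a2 : ℝ → ℝ) (k : ℕ) (α : ℝ) : ℝ :=
  (1 / (Nat.factorial (k - 1) : ℝ)) *
    ((1 - u α) * (-1) ^ k / k
      + at1 α * (-(1 - c₁)) ^ (k - 1) + at2 α * (-(1 - c₂)) ^ (k - 1)
      + a1 α * c₁ ^ (k - 1) + a2 α * c₂ ^ (k - 1)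
      - α ^ k / k)

/-- Obstruction to discrete order five for two-stage explicit TSRK methods with
`c₁ = 0`, `c₂ = 1`: if `Γ₂(1) = Γ₃(1) = Γ₄(1) = 0` then `Γ₅(1) = 1/90 ≠ 0`. -/
theorem two_stage_tsrk_no_discrete_order_five (v bt1 bt2 b1 b2 : ℝ → ℝ)
    (h2 : Gamma2 0 1 v bt1 bt2 b1 b2 2 1 = 0)
    (h3 : Gamma2 0 1 v bt1 bt2 b1 b2 3 1 = 0)
    (h4 : Gamma2 0 1 v bt1 bt2 b1 b2 4 1 = 0) :
    Gamma2 0 1 v bt1 bt2 b1 b2 5 1 = 1 / 90 ∧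
      Gamma2 0 1 v bt1 bt2 b1 b2 5 1 ≠ 0 := by
  simp only [Gamma2] at *
  norm_num [Nat.factorial] at *
  constructor
  · linarith
  · linarith
end

section
/- Choice of abscissa for discrete stage order five: In the setting of the two-stage explicit TSRK method of uniform order five (s = 2, c_1 = 0, coefficients u_2(α) = (α+1)²·(1 − 2α + 3α²/(2c_2−1)), ã_{21}(α) = α²(α+1) − α²(α+1)²(3c_2−1)/(2c_2(2c_2−1)), ã_{22}(α) = α²(α+1)²/(2c_2(c_2−1)(2c_2−1)), a_{21}(α) = α(α+1)²·(1 − α(3c_2−2)/(2(2c_2−1)(c_2−1))), a_{22} = 0), define Γ_{2,5}(α) := (1/4!)·[ −(1−u_2(α))/5 + ã_{21}(α) + ã_{22}(α)·(1−c_2)^4 + a_{21}(α)·c_1^4 − α^5/5 ]. Then for c_2 = (11−√41)/10 one has Γ_{2,5}(1) = 0. (Indeed, Γ_{2,5}(1) vanishes exactly when 5c_2² − 11c_2 + 4 = 0, i.e. c_2 = (11±√41)/10.) -/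
/-! Clearing denominators, `Γ_{2,5}(1) = (5c₂² − 11c₂ + 4) / (60 (2c₂ − 1))` for the
fifth-order method, and `(11 − √41)/10` is the root of the numerator lying in `(0, 1/2)`,
away from the poles `c₂ ∈ {0, 1/2, 1}` of the coefficients. -/

noncomputable def tsrkGammaTwoFive (c : ℝ) : ℝ → ℝ :=
  Gamma2 0 c
    (fun α => (α + 1) ^ 2 * (1 - 2 * α + 3 * α ^ 2 / (2 * c - 1)))
    (fun α => α ^ 2 * (α + 1) - α ^ 2 * (α + 1) ^ 2 * (3 * c - 1) / (2 * c * (2 * c - 1)))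
    (fun α => α ^ 2 * (α + 1) ^ 2 / (2 * c * (c - 1) * (2 * c - 1)))
    (fun α => α * (α + 1) ^ 2 * (1 - α * (3 * c - 2) / (2 * (2 * c - 1) * (c - 1))))
    (fun _ => 0) 5

theorem tsrkGammaTwoFive_one {c : ℝ} (hc₀ : c ≠ 0) (hc₁ : c ≠ 1) (hc : 2 * c - 1 ≠ 0) :
    tsrkGammaTwoFive c 1 = (5 * c ^ 2 - 11 * c + 4) / (60 * (2 * c - 1)) := by
  have hc₁' : c - 1 ≠ 0 := sub_ne_zero.mpr hc₁
  simp only [tsrkGammaTwoFive, Gamma2]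
  field_simp
  ring

theorem tsrkGammaTwoFive_one_eq_zero_iff {c : ℝ} (hc₀ : c ≠ 0) (hc₁ : c ≠ 1)
    (hc : 2 * c - 1 ≠ 0) :
    tsrkGammaTwoFive c 1 = 0 ↔ 5 * c ^ 2 - 11 * c + 4 = 0 := by
  rw [tsrkGammaTwoFive_one hc₀ hc₁ hc, div_eq_zero_iff,
    or_iff_left (mul_ne_zero (by norm_num) hc)]

theorem eleven_sub_sqrt_41_div_ten_mem_Ioo : (11 - √41) / 10 ∈ Set.Ioo (0 : ℝ) (1 / 2) := by
  have h6 : (6 : ℝ) < √41 := by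
    rw [show (6 : ℝ) = √(6 ^ 2) by simp]
    exact Real.sqrt_lt_sqrt (by norm_num) (by norm_num)
  have h7 : √41 < 11 := by
    rw [show (11 : ℝ) = √(11 ^ 2) by simp]
    exact Real.sqrt_lt_sqrt (by norm_num) (by norm_num)
  constructor <;> linarith

theorem eleven_sub_sqrt_41_div_ten_isRoot_quadratic : 5 * ((11 - √41) / 10) ^ 2 - 11 * ((11 - √41) / 10) + 4 = 0 := by
  have h : √41 ^ 2 = 41 := Real.sq_sqrt (by norm_num)
  linear_combination h / 20

/-- Choice of abscissa for discrete stage order five: for the fifth-order two-stage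
explicit TSRK method, the stage order polynomial `Γ_{2,5}` vanishes at `α = 1` for
`c₂ = (11 − √41)/10`. -/
theorem two_stage_tsrk_discrete_stage_order_five (c₂ : ℝ)
    (hc₂ : c₂ = (11 - Real.sqrt 41) / 10) :
    Gamma2 0 c₂
      (fun α => (α + 1) ^ 2 * (1 - 2 * α + 3 * α ^ 2 / (2 * c₂ - 1)))
      (fun α => α ^ 2 * (α + 1) -
        α ^ 2 * (α + 1) ^ 2 * (3 * c₂ - 1) / (2 * c₂ * (2 * c₂ - 1)))
      (fun α => α ^ 2 * (α + 1) ^ 2 / (2 * c₂ * (c₂ - 1) * (2 * c₂ - 1)))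
      (fun α => α * (α + 1) ^ 2 *
        (1 - α * (3 * c₂ - 2) / (2 * (2 * c₂ - 1) * (c₂ - 1))))
      (fun _ => 0) 5 1 = 0 := by
  obtain ⟨hpos, hlt⟩ := hc₂ ▸ eleven_sub_sqrt_41_div_ten_mem_Ioo
  change tsrkGammaTwoFive c₂ 1 = 0
  rw [tsrkGammaTwoFive_one_eq_zero_iff hpos.ne' (by linarith) (by linarith), hc₂]
  exact eleven_sub_sqrt_41_div_ten_isRoot_quadratic
end

section
/- No explicit one-step Runge–Kutta method for retarded functional differential equations has uniform stage order two: Fix an integer s ≥ 2 and abscissae c_1, …, c_s ≥ 0 with c_1 = 0, and set c_{s+1} := 1. Suppose the tableau satisfies the one-step conditions u_i(α) = 1 and ã_{ij}(α) = 0 for all i, j and all α, and is explicit in its second row, i.e. a_{2j}(α) = 0 for all j ≥ 2. Then, with Γ_{2k}(α) := (1/(k−1)!)·[ (1−u_2(α))·(−1)^k/k + Σ_{j=1}^{s} ã_{2j}(α)·(−(1−c_j))^{k−1} + Σ_{j=1}^{s} a_{2j}(α)·c_j^{k−1} − α^k/k ], one has Γ_{2k}(α) = −α^k/k! for every integer k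 ≥ 2 and every α ∈ ℝ. In particular, if c_2 > 0 then Γ_{22}(α) = −α²/2 ≠ 0 for all α ∈ (0, c_2], so the uniform stage order two condition Γ_{22} ≡ 0 on [0,c_2] fails. -/
/-- The order polynomial `Γ_{ik}` of a TSRK method with `s` stages, for a row with
coefficient functions `u` (previous-values weight), `atil` (previous-step stage weights)
and `a` (current-step stage weights), with abscissae `c`. -/
noncomputable def GammaRow (s : ℕ) (c : Fin s → ℝ) (u : ℝ → ℝ) (atil a : Fin s → ℝ → ℝ)
    (k : ℕ) (α : ℝ) : ℝ :=
  (1 / (Nat.factorial (k - 1) : ℝ)) *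
    ((1 - u α) * (-1) ^ k / k
      + (∑ j, atil j α * (-(1 - c j)) ^ (k - 1))
      + (∑ j, a j α * (c j) ^ (k - 1))
      - α ^ k / k)

/-! With `c₁ = 0`, an explicit second row only sees the first stage, whose weight is
killed by `c₁ ^ (k - 1)` as soon as `k ≥ 2`. What remains of `Γ_{2k}` for a one-step
method is the pure quadrature-error term `-α^k/k!`, which does not vanish for `α ≠ 0`. -/

open Nat

lemma sum_mul_pow_eq_zero_of_first_only {s : ℕ} (h0 : 0 < s) {c f : Fin s → ℝ}
    (hc0 : c ⟨0, h0⟩ = 0) (hf : ∀ j : Fin s, 1 ≤ (j : ℕ) → f j = 0) {m : ℕ} (hm : m ≠ 0) :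
    ∑ j, f j * c j ^ m = 0 := by
  refine Finset.sum_eq_zero fun ⟨j, hj⟩ _ => ?_
  rcases Nat.eq_zero_or_pos j with rfl | hpos
  · rw [hc0, zero_pow hm, mul_zero]
  · rw [hf ⟨j, hj⟩ hpos, zero_mul]

lemma one_div_factorial_pred_mul_div_self {k : ℕ} (hk : k ≠ 0) (x : ℝ) :
    1 / ((k - 1)! : ℝ) * (x / k) = x / k ! := by
  obtain ⟨n, rfl⟩ := Nat.exists_eq_succ_of_ne_zero hk
  rw [Nat.succ_sub_one, Nat.factorial_succ]
  push_cast
  field_simp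

lemma GammaRow_eq_neg_pow_div_factorial {s : ℕ} {c : Fin s → ℝ} {u : ℝ → ℝ}
    {atil a : Fin s → ℝ → ℝ} {k : ℕ} {α : ℝ} (hk : k ≠ 0) (hu : u α = 1)
    (hatil : ∀ j, atil j α = 0) (ha : ∑ j, a j α * c j ^ (k - 1) = 0) :
    GammaRow s c u atil a k α = -α ^ k / k ! := by
  simp only [GammaRow, hu, hatil, ha, sub_self, zero_mul, zero_div, Finset.sum_const_zero,
    zero_add, zero_sub, mul_neg, one_div_factorial_pred_mul_div_self hk, neg_div]

/-- No explicit one-step Runge–Kutta method for RFDEs has uniform stage order two: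
under the one-step conditions `u_i ≡ 1`, `ã_{ij} ≡ 0` and explicitness of the second
row (`a_{2j} ≡ 0` for `j ≥ 2`), with `c₁ = 0`, the second-stage order polynomials are
`Γ_{2k}(α) = −α^k/k!` for all `k ≥ 2`; in particular, if `c₂ > 0` then
`Γ_{22}` does not vanish on `(0, c₂]`. -/
theorem one_step_rk_no_stage_order_two (s : ℕ) (hs : 2 ≤ s) (c : Fin s → ℝ)
    (hc1 : c ⟨0, by omega⟩ = 0)
    (u : Fin (s + 1) → ℝ → ℝ) (atil a : Fin (s + 1) → Fin s → ℝ → ℝ)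
    (hu : ∀ i α, u i α = 1) (hatil : ∀ i j α, atil i j α = 0)
    (ha2 : ∀ j : Fin s, 1 ≤ (j : ℕ) → ∀ α, a ⟨1, by omega⟩ j α = 0) :
    (∀ k : ℕ, 2 ≤ k → ∀ α : ℝ,
      GammaRow s c (u ⟨1, by omega⟩) (atil ⟨1, by omega⟩) (a ⟨1, by omega⟩) k α =
        -α ^ k / (Nat.factorial k : ℝ)) ∧
    (0 < c ⟨1, by omega⟩ → ∀ α ∈ Set.Ioc (0 : ℝ) (c ⟨1, by omega⟩),
      GammaRow s c (u ⟨1, by omega⟩) (atil ⟨1, by omega⟩) (a ⟨1, by omega⟩) 2 α ≠ 0) := by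
  have hΓ : ∀ k : ℕ, 2 ≤ k → ∀ α : ℝ,
      GammaRow s c (u ⟨1, by omega⟩) (atil ⟨1, by omega⟩) (a ⟨1, by omega⟩) k α =
        -α ^ k / (k ! : ℝ) := fun k hk α =>
    GammaRow_eq_neg_pow_div_factorial (by omega) (hu _ α) (fun j => hatil _ j α)
      (sum_mul_pow_eq_zero_of_first_only (by omega) hc1 (fun j hj => ha2 j hj α) (by omega))
  refine ⟨hΓ, fun _ α hα => ?_⟩
  rw [hΓ 2 le_rfl α]
  exact div_ne_zero (neg_ne_zero.mpr (pow_ne_zero 2 hα.1.ne')) (by positivity)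
end
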